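/- arXiv:1503.04346 — 9 statements merged into one kernel-verified Lean document; each statement's English description precedes it below -/
import Mathlib

section
/- Let F be an archimedean linearly ordered field (every element is bounded in absolute value by a natural number). For A, B ∈ Mₙ(F), if ker B ⊆ ker A then there exists r ∈ ℕ such that r·BᵀB − AᵀA is positive semidefinite. -/
/-
Since ker B ⊆ ker A, the map A factors through B: A = C B for some matrix C. By Cauchy–Schwarz,
|C w|² ≤ s |w|² with s the sum of the squares of the entries of C, so |A v|² ≤ s |B v|² for all v.
Any natural number r ≥ s, which exists by the archimedean property, then makes r BᵀB − AᵀA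
positive semidefinite.
-/

open Matrix

def PSD {F : Type*} [Field F] [LinearOrder F] [IsStrictOrderedRing F] {n : ℕ} (M : Matrix (Fin n) (Fin n) F) : Prop :=
  ∀ v : Fin n → F, 0 ≤ v ⬝ᵥ M.mulVec v

theorem LinearMap.exists_comp_eq_of_ker_le {K V U W : Type*} [DivisionRing K]
    [AddCommGroup V] [Module K V] [AddCommGroup U] [Module K U] [AddCommGroup W] [Module K W]
    (f : V →ₗ[K] W) (g : V →ₗ[K] U) (hker : ker g ≤ ker f) :
    ∃ h : U →ₗ[K] W, h ∘ₗ g = f := by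
  obtain ⟨l, hl⟩ := ((ker g).liftQ g le_rfl).exists_leftInverse_of_injective
    (Submodule.ker_liftQ_eq_bot _ _ _ le_rfl)
  refine ⟨(ker g).liftQ f hker ∘ₗ l, LinearMap.ext fun x => ?_⟩
  simpa using congrArg ((ker g).liftQ f hker) (LinearMap.congr_fun hl (Submodule.Quotient.mk x))

theorem Matrix.exists_eq_mul_of_mulVec_eq_zero_imp {K m n p : Type*} [Field K]
    [Fintype m] [Fintype n] [Fintype p] [DecidableEq n] [DecidableEq p]
    (A : Matrix m n K) (B : Matrix p n K) (hker : ∀ x, B *ᵥ x = 0 → A *ᵥ x = 0) :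
    ∃ C : Matrix m p K, A = C * B := by
  obtain ⟨h, hh⟩ := LinearMap.exists_comp_eq_of_ker_le (toLin' A) (toLin' B) fun x => hker x
  refine ⟨LinearMap.toMatrix' h, ?_⟩
  simpa only [LinearMap.toMatrix'_comp, LinearMap.toMatrix'_toLin'] using
    (congrArg LinearMap.toMatrix' hh).symm

theorem Matrix.mulVec_dotProduct_mulVec_self_le {R m n : Type*} [CommRing R] [LinearOrder R]
    [IsStrictOrderedRing R] [Fintype m] [Fintype n] (C : Matrix m n R) (w : n → R) :
    C *ᵥ w ⬝ᵥ C *ᵥ w ≤ (∑ i, ∑ j, C i j ^ 2) * (w ⬝ᵥ w) := by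
  calc C *ᵥ w ⬝ᵥ C *ᵥ w = ∑ i, (∑ j, C i j * w j) ^ 2 := by
        simp [dotProduct, mulVec, sq]
    _ ≤ ∑ i, (∑ j, C i j ^ 2) * ∑ j, w j ^ 2 :=
        Finset.sum_le_sum fun i _ => Finset.sum_mul_sq_le_sq_mul_sq _ _ _
    _ = (∑ i, ∑ j, C i j ^ 2) * (w ⬝ᵥ w) := by
        simp [← Finset.sum_mul, dotProduct, sq]

theorem Matrix.dotProduct_transpose_mul_self_mulVec {R m n : Type*} [CommSemiring R]
    [Fintype m] [Fintype n] (B : Matrix m n R) (v : n → R) :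
    v ⬝ᵥ (Bᵀ * B) *ᵥ v = B *ᵥ v ⬝ᵥ B *ᵥ v := by
  rw [← mulVec_mulVec, dotProduct_mulVec, vecMul_transpose]

theorem stmt_2 (F : Type*) [Field F] [LinearOrder F] [IsStrictOrderedRing F]
    (harch : ∀ a : F, ∃ m : ℕ, |a| ≤ (m : F)) (n : ℕ)
    (A B : Matrix (Fin n) (Fin n) F)
    (hker : ∀ x : Fin n → F, B.mulVec x = 0 → A.mulVec x = 0) :
    ∃ r : ℕ, PSD ((r : F) • (Bᵀ * B) - Aᵀ * A) := by
  obtain ⟨C, rfl⟩ := exists_eq_mul_of_mulVec_eq_zero_imp A B hker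
  obtain ⟨r, hr⟩ := harch (∑ i, ∑ j, C i j ^ 2)
  refine ⟨r, fun v => ?_⟩
  rw [sub_mulVec, dotProduct_sub, smul_mulVec, dotProduct_smul, smul_eq_mul,
    dotProduct_transpose_mul_self_mulVec, dotProduct_transpose_mul_self_mulVec, sub_nonneg,
    ← mulVec_mulVec]
  calc C *ᵥ (B *ᵥ v) ⬝ᵥ C *ᵥ (B *ᵥ v) ≤ (∑ i, ∑ j, C i j ^ 2) * (B *ᵥ v ⬝ᵥ B *ᵥ v) :=
        mulVec_dotProduct_mulVec_self_le C (B *ᵥ v)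
    _ ≤ r * (B *ᵥ v ⬝ᵥ B *ᵥ v) :=
        mul_le_mul_of_nonneg_right ((le_abs_self _).trans hr)
          (Finset.sum_nonneg fun i _ => mul_self_nonneg _)
end

section
/- Let F be a linearly ordered field. If A ~ B (archimedean equivalence) in Mₙ(F), then A·C ~ B·C for every C ∈ Mₙ(F). -/
/-! Since `(X C)ᵀ (X C) = Cᵀ (Xᵀ X) C`, both witnesses of `A ~ B` turn into their congruences by `C`,
which are again positive semidefinite; so the same `r` witnesses `A C ~ B C`. -/

open Matrix

def ArchSim {F : Type*} [Field F] [LinearOrder F] [IsStrictOrderedRing F] {n : ℕ}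
    (A B : Matrix (Fin n) (Fin n) F) : Prop :=
  ∃ r : ℕ, PSD ((r : F) • (Bᵀ * B) - Aᵀ * A) ∧ PSD ((r : F) • (Aᵀ * A) - Bᵀ * B)

theorem PSD.transpose_mul_mul {F : Type*} [Field F] [LinearOrder F] [IsStrictOrderedRing F]
    {n k : ℕ} {M : Matrix (Fin n) (Fin n) F} (hM : PSD M) (C : Matrix (Fin n) (Fin k) F) :
    PSD (Cᵀ * M * C) := by
  intro v
  simpa [dotProduct_mulVec, ← vecMul_vecMul, vecMul_transpose] using hM (C *ᵥ v)

theorem smul_transpose_mul_self_mul_sub {R : Type*} [CommRing R] {l m k : Type*} [Fintype l]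
    [Fintype m] (c : R) (X Y : Matrix l m R) (C : Matrix m k R) :
    c • ((X * C)ᵀ * (X * C)) - (Y * C)ᵀ * (Y * C) = Cᵀ * (c • (Xᵀ * X) - Yᵀ * Y) * C := by
  simp only [transpose_mul, Matrix.mul_sub, Matrix.sub_mul, Matrix.mul_smul, Matrix.smul_mul,
    Matrix.mul_assoc]

theorem stmt_6 (F : Type*) [Field F] [LinearOrder F] [IsStrictOrderedRing F] (n : ℕ)
    (A B : Matrix (Fin n) (Fin n) F) (h : ArchSim A B) :
    ∀ C : Matrix (Fin n) (Fin n) F, ArchSim (A * C) (B * C) := by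
  intro C
  obtain ⟨r, hBA, hAB⟩ := h
  refine ⟨r, ?_, ?_⟩ <;> rw [smul_transpose_mul_self_mul_sub]
  · exact hBA.transpose_mul_mul C
  · exact hAB.transpose_mul_mul C
end

section
/- Let F be a linearly ordered field and A, B ∈ Sₙ⁺(F) positive semidefinite with A ≤ B (B − A positive semidefinite). If A is invertible, then B is invertible, A⁻¹ and B⁻¹ are positive semidefinite, and B⁻¹ ≤ A⁻¹. -/
open Matrix

namespace Matrix

variable {ι R : Type*} [Fintype ι]

theorem IsSymm.dotProduct_mulVec_comm [CommSemiring R] {A : Matrix ι ι R} (hA : A.IsSymm)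
    (x y : ι → R) : x ⬝ᵥ A *ᵥ y = y ⬝ᵥ A *ᵥ x := by
  rw [dotProduct_mulVec, ← vecMul_transpose, hA, dotProduct_comm]

theorem isUnit_of_dotProduct_mulVec_self_pos [DecidableEq ι] [Field R] [Preorder R]
    {A : Matrix ι ι R} (hA : ∀ v, v ≠ 0 → 0 < v ⬝ᵥ A *ᵥ v) : IsUnit A := by
  rw [← mulVec_injective_iff_isUnit]
  intro x y hxy
  by_contra hne
  have hker : A *ᵥ (x - y) = 0 := by rw [mulVec_sub, hxy, sub_self]
  simpa [hker] using hA (x - y) (sub_ne_zero.mpr hne)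

variable [DecidableEq ι] [CommRing R] {A : Matrix ι ι R}

theorem mulVec_nonsing_inv_mulVec (hA : IsUnit A) (v : ι → R) : A *ᵥ A⁻¹ *ᵥ v = v := by
  rw [mulVec_mulVec, mul_nonsing_inv A (A.isUnit_iff_isUnit_det.mp hA), one_mulVec]

theorem nonsing_inv_mulVec_mulVec (hA : IsUnit A) (v : ι → R) : A⁻¹ *ᵥ A *ᵥ v = v := by
  rw [mulVec_mulVec, nonsing_inv_mul A (A.isUnit_iff_isUnit_det.mp hA), one_mulVec]

end Matrix

namespace PSD

variable {F : Type*} [Field F] [LinearOrder F] [IsStrictOrderedRing F] {n : ℕ}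
  {A B : Matrix (Fin n) (Fin n) F}

/-- If `vᵀAv = 0`, the quadratic `t ↦ (tv + w)ᵀA(tv + w)` is affine in `t`, so it stays
nonnegative only if its slope `2 vᵀAw` vanishes. -/
theorem dotProduct_mulVec_eq_zero (hA : PSD A) (hAs : A.IsSymm) {v : Fin n → F}
    (hv : v ⬝ᵥ A *ᵥ v = 0) (w : Fin n → F) : v ⬝ᵥ A *ᵥ w = 0 := by
  by_contra hc
  set c := v ⬝ᵥ A *ᵥ w
  set d := w ⬝ᵥ A *ᵥ w
  set t := -(d + 1) / (2 * c)
  have hexpand : (t • v + w) ⬝ᵥ A *ᵥ (t • v + w) = 2 * t * c + d := by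
    simp only [mulVec_add, mulVec_smul, add_dotProduct, dotProduct_add, smul_dotProduct,
      dotProduct_smul, smul_eq_mul, hv, hAs.dotProduct_mulVec_comm w v]
    ring
  have hslope : 2 * t * c = -(d + 1) := by
    simp only [t]
    field_simp
  linarith [hA (t • v + w)]

theorem mulVec_eq_zero (hA : PSD A) (hAs : A.IsSymm) {v : Fin n → F}
    (hv : v ⬝ᵥ A *ᵥ v = 0) : A *ᵥ v = 0 := by
  ext i
  have h := hA.dotProduct_mulVec_eq_zero hAs hv (Pi.single i 1)
  rw [hAs.dotProduct_mulVec_comm] at h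
  simpa using h

theorem dotProduct_mulVec_pos (hA : PSD A) (hAs : A.IsSymm) (hAu : IsUnit A)
    {v : Fin n → F} (hv : v ≠ 0) : 0 < v ⬝ᵥ A *ᵥ v := by
  refine (hA v).lt_of_ne fun h ↦ hv ?_
  rw [← nonsing_inv_mulVec_mulVec hAu v, hA.mulVec_eq_zero hAs h.symm, mulVec_zero]

theorem isUnit_of_psd_sub (hA : PSD A) (hAs : A.IsSymm) (hAu : IsUnit A) (hle : PSD (B - A)) :
    IsUnit B := by
  refine isUnit_of_dotProduct_mulVec_self_pos fun v hv ↦ ?_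
  have h := hle v
  rw [sub_mulVec, dotProduct_sub] at h
  linarith [hA.dotProduct_mulVec_pos hAs hAu hv]

theorem inv (hA : PSD A) (hAu : IsUnit A) : PSD A⁻¹ := fun v ↦ by
  simpa [mulVec_nonsing_inv_mulVec hAu, dotProduct_comm] using hA (A⁻¹ *ᵥ v)

theorem inv_sub_inv (hA : PSD A) (hAs : A.IsSymm) (hAu : IsUnit A) (hBu : IsUnit B)
    (hle : PSD (B - A)) : PSD (A⁻¹ - B⁻¹) := by
  intro v
  set x := A⁻¹ *ᵥ v
  set w := B⁻¹ *ᵥ v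
  have hexpand : (w - x) ⬝ᵥ A *ᵥ (w - x) = w ⬝ᵥ A *ᵥ w - 2 * (v ⬝ᵥ w) + v ⬝ᵥ x := by
    simp only [mulVec_sub, sub_dotProduct, dotProduct_sub, hAs.dotProduct_mulVec_comm x w, x,
      mulVec_nonsing_inv_mulVec hAu, dotProduct_comm _ v]
    ring
  have hAw : w ⬝ᵥ A *ᵥ w ≤ v ⬝ᵥ w := by
    have h := hle w
    rw [sub_mulVec, dotProduct_sub, mulVec_nonsing_inv_mulVec hBu, dotProduct_comm] at h
    linarith
  rw [sub_mulVec, dotProduct_sub]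
  linarith [hA (w - x)]

end PSD

theorem stmt_7_general (F : Type*) [Field F] [LinearOrder F] [IsStrictOrderedRing F] (n : ℕ)
    (A B : Matrix (Fin n) (Fin n) F)
    (hAs : A.IsSymm) (hA : PSD A) (hB : PSD B)
    (hle : PSD (B - A)) (hinv : IsUnit A) :
    IsUnit B ∧ PSD A⁻¹ ∧ PSD B⁻¹ ∧ PSD (A⁻¹ - B⁻¹) := by
  have hBu : IsUnit B := hA.isUnit_of_psd_sub hAs hinv hle
  exact ⟨hBu, hA.inv hinv, hB.inv hBu, hA.inv_sub_inv hAs hinv hBu hle⟩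

theorem stmt_7 (F : Type*) [Field F] [LinearOrder F] [IsStrictOrderedRing F] (n : ℕ)
    (A B : Matrix (Fin n) (Fin n) F)
    (hAs : A.IsSymm) (hBs : B.IsSymm) (hA : PSD A) (hB : PSD B)
    (hle : PSD (B - A)) (hinv : IsUnit A) :
    IsUnit B ∧ PSD A⁻¹ ∧ PSD B⁻¹ ∧ PSD (A⁻¹ - B⁻¹) :=
  stmt_7_general F n A B hAs hA hB hle hinv
end

section
/- Let F be a linearly ordered field and A ∈ Sₙ⁺(F) a positive semidefinite matrix. Then there exists r ∈ ℕ with A ≤ r·Iₙ (A ⊒ Iₙ in the notation A ⊒ B iff A ≤ rB for some r ∈ ℕ) if and only if every diagonal entry of A is bounded, i.e., for each i there is r ∈ ℕ with aᵢᵢ ≤ r. -/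
/-!
Testing the quadratic form of `A` on `eᵢ` and on `eᵢ ± eⱼ` gives `0 ≤ aᵢᵢ` and
`|aᵢⱼ + aⱼᵢ| ≤ aᵢᵢ + aⱼⱼ`. Hence if every diagonal entry is at most `c`, then
`vᵀAv = ½ ∑ᵢⱼ vᵢvⱼ(aᵢⱼ + aⱼᵢ) ≤ c (∑ᵢ |vᵢ|)² ≤ n c ∑ᵢ vᵢ²` by Cauchy–Schwarz, that is
`A ≤ n c · I`. Conversely, `A ≤ r · I` tested on `eᵢ` gives `aᵢᵢ ≤ r`.
-/

open Matrix

section Algebra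

variable {R ι : Type*} [CommRing R] [Fintype ι]

lemma dotProduct_mulVec_self_eq_sum (A : Matrix ι ι R) (v : ι → R) :
    v ⬝ᵥ A *ᵥ v = ∑ i, ∑ j, v i * v j * A i j := by
  simp only [dotProduct, mulVec, Finset.mul_sum]
  exact Finset.sum_congr rfl fun i _ => Finset.sum_congr rfl fun j _ => by ring

lemma two_mul_dotProduct_mulVec_self (A : Matrix ι ι R) (v : ι → R) :
    2 * (v ⬝ᵥ A *ᵥ v) = ∑ i, ∑ j, v i * v j * (A i j + A j i) := by
  have hswap : ∑ i, ∑ j, v i * v j * A j i = ∑ i, ∑ j, v i * v j * A i j := by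
    rw [Finset.sum_comm]
    simp only [mul_comm (v _) (v _)]
  simp only [mul_add, Finset.sum_add_distrib, hswap, dotProduct_mulVec_self_eq_sum]
  ring

lemma dotProduct_mulVec_single_add_single [DecidableEq ι] (A : Matrix ι ι R) (i j : ι)
    (a b : R) :
    (Pi.single i a + Pi.single j b) ⬝ᵥ A *ᵥ (Pi.single i a + Pi.single j b) =
      a * a * A i i + a * b * (A i j + A j i) + b * b * A j j := by
  simp only [mulVec_add, mulVec_single, op_smul_eq_smul, dotProduct_add, dotProduct_smul,
    add_dotProduct, single_dotProduct, col_apply, smul_eq_mul]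
  ring

lemma dotProduct_smul_one_sub_mulVec [DecidableEq ι] (A : Matrix ι ι R) (c : R) (v : ι → R) :
    v ⬝ᵥ (c • (1 : Matrix ι ι R) - A) *ᵥ v = c * (v ⬝ᵥ v) - v ⬝ᵥ A *ᵥ v := by
  simp [sub_mulVec, smul_mulVec, dotProduct_sub]

end Algebra

namespace PSD

variable {F : Type*} [Field F] [LinearOrder F] [IsStrictOrderedRing F] {n : ℕ}
  {A : Matrix (Fin n) (Fin n) F}

lemma diag_nonneg (hA : PSD A) (i : Fin n) : 0 ≤ A i i := by
  simpa [mulVec_single, single_dotProduct] using hA (Pi.single i 1)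

lemma abs_add_transpose_le (hA : PSD A) (i j : Fin n) : |A i j + A j i| ≤ A i i + A j j := by
  have hplus := hA (Pi.single i 1 + Pi.single j 1)
  have hminus := hA (Pi.single i 1 + Pi.single j (-1))
  rw [dotProduct_mulVec_single_add_single] at hplus hminus
  rw [abs_le]
  constructor <;> linarith

lemma dotProduct_mulVec_self_le (hA : PSD A) {c : F} (hc0 : 0 ≤ c) (hc : ∀ i, A i i ≤ c)
    (v : Fin n → F) : v ⬝ᵥ A *ᵥ v ≤ n * c * (v ⬝ᵥ v) := by
  have hcs : (∑ i, |v i|) ^ 2 ≤ n * (v ⬝ᵥ v) := by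
    simpa [dotProduct, sq_abs, ← sq] using
      sq_sum_le_card_mul_sum_sq (s := Finset.univ) (f := fun i => |v i|)
  have hterm : ∀ i j, v i * v j * (A i j + A j i) ≤ 2 * c * (|v i| * |v j|) := fun i j =>
    calc v i * v j * (A i j + A j i) ≤ |v i * v j * (A i j + A j i)| := le_abs_self _
      _ = |A i j + A j i| * (|v i| * |v j|) := by rw [abs_mul, abs_mul]; ring
      _ ≤ 2 * c * (|v i| * |v j|) := by
        gcongr
        linarith [hA.abs_add_transpose_le i j, hc i, hc j]
  have hquad : 2 * (v ⬝ᵥ A *ᵥ v) ≤ 2 * c * (∑ i, |v i|) ^ 2 :=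
    calc 2 * (v ⬝ᵥ A *ᵥ v) = ∑ i, ∑ j, v i * v j * (A i j + A j i) :=
          two_mul_dotProduct_mulVec_self A v
      _ ≤ ∑ i, ∑ j, 2 * c * (|v i| * |v j|) :=
          Finset.sum_le_sum fun i _ => Finset.sum_le_sum fun j _ => hterm i j
      _ = 2 * c * (∑ i, |v i|) ^ 2 := by
          simp_rw [sq, Finset.sum_mul_sum, Finset.mul_sum]
  nlinarith [mul_le_mul_of_nonneg_left hcs hc0]

lemma smul_one_sub_of_diag_le (hA : PSD A) {c : F} (hc0 : 0 ≤ c) (hc : ∀ i, A i i ≤ c) :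
    PSD ((n * c) • (1 : Matrix (Fin n) (Fin n) F) - A) := fun v => by
  rw [dotProduct_smul_one_sub_mulVec, sub_nonneg]
  exact hA.dotProduct_mulVec_self_le hc0 hc v

end PSD

theorem stmt_8_general (F : Type*) [Field F] [LinearOrder F] [IsStrictOrderedRing F] (n : ℕ)
    (A : Matrix (Fin n) (Fin n) F) (hA : PSD A) :
    (∃ r : ℕ, PSD ((r : F) • (1 : Matrix (Fin n) (Fin n) F) - A)) ↔
      ∀ i : Fin n, ∃ r : ℕ, A i i ≤ (r : F) := by
  constructor
  · rintro ⟨r, hr⟩ i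
    exact ⟨r, by simpa using hr.diag_nonneg i⟩
  · intro h
    choose f hf using h
    obtain ⟨r, hr⟩ := Finite.exists_le f
    have hdiag : ∀ i, A i i ≤ r := fun i => (hf i).trans (by exact_mod_cast hr i)
    exact ⟨n * r, by exact_mod_cast hA.smul_one_sub_of_diag_le r.cast_nonneg hdiag⟩

theorem stmt_8 (F : Type*) [Field F] [LinearOrder F] [IsStrictOrderedRing F] (n : ℕ)
    (A : Matrix (Fin n) (Fin n) F) (hAs : A.IsSymm) (hA : PSD A) :
    (∃ r : ℕ, PSD ((r : F) • (1 : Matrix (Fin n) (Fin n) F) - A)) ↔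
      ∀ i : Fin n, ∃ r : ℕ, A i i ≤ (r : F) :=
  stmt_8_general F n A hA
end

section
/- Let F be a linearly ordered field and A ∈ Sₙ⁺(F) positive semidefinite. If all diagonal entries of A are bounded (by a natural number) and det A is bibounded (i.e., there exist r, s ∈ ℕ, s ≥ 1 with 1/s ≤ det A ≤ r), then A is invertible and there exist r, s ∈ ℕ with (1/s)·Iₙ ≤ A ≤ r·Iₙ in the positive semidefinite order. -/
open Matrix

/-!
Cauchy–Schwarz for the form `v ↦ v ⬝ᵥ A *ᵥ v` gives `A i j ^ 2 ≤ A i i * A j j`, so every entry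
of `A` is bounded by one natural number `c`, and the form is at most `c n |v|²`. The entries of
the adjugate are then bounded by `n! cⁿ`, and `A⁻¹ = (det A)⁻¹ • adj A` with `(det A)⁻¹ ≤ s`, so
the form of `A⁻¹` is at most `s n! cⁿ n |v|²`. Cauchy–Schwarz once more, for `v` and `A⁻¹ v`, gives
`|v|⁴ ≤ (v ⬝ᵥ A *ᵥ v) (v ⬝ᵥ A⁻¹ *ᵥ v)`, which is the lower bound. All constants are explicit
natural numbers, so no Archimedean property of `F` is needed.
-/

open Finset
open scoped Nat

section EntryBounds

variable {ι R : Type*} [Fintype ι] [CommRing R] [LinearOrder R] [IsStrictOrderedRing R]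

lemma dotProduct_self_nonneg (v : ι → R) : 0 ≤ v ⬝ᵥ v :=
  sum_nonneg fun i _ => mul_self_nonneg (v i)

lemma abs_dotProduct_mulVec_self_le {B : Matrix ι ι R} {c : R} (hc : 0 ≤ c)
    (hB : ∀ i j, |B i j| ≤ c) (v : ι → R) :
    |v ⬝ᵥ B *ᵥ v| ≤ c * Fintype.card ι * (v ⬝ᵥ v) := by
  calc |v ⬝ᵥ B *ᵥ v| = |∑ i, ∑ j, v i * B i j * v j| := by
        simp only [dotProduct, mulVec, mul_sum, mul_assoc]
    _ ≤ ∑ i, ∑ j, |v i| * c * |v j| := by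
        refine (abs_sum_le_sum_abs _ _).trans (sum_le_sum fun i _ => ?_)
        refine (abs_sum_le_sum_abs _ _).trans (sum_le_sum fun j _ => ?_)
        rw [abs_mul, abs_mul]
        gcongr
        exact hB i j
    _ = c * (∑ i, |v i|) ^ 2 := by
        rw [sq, sum_mul_sum, mul_sum]
        simp only [mul_sum]
        exact sum_congr rfl fun i _ => sum_congr rfl fun j _ => by ring
    _ ≤ c * (Fintype.card ι * ∑ i, |v i| ^ 2) := by
        gcongr
        exact sq_sum_le_card_mul_sum_sq
    _ = c * Fintype.card ι * (v ⬝ᵥ v) := by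
        simp only [dotProduct, sq, abs_mul_abs_self, mul_assoc]

variable [DecidableEq ι]

lemma abs_adjugate_apply_le {B : Matrix ι ι R} {c : R} (hc : 1 ≤ c)
    (hB : ∀ i j, |B i j| ≤ c) (i j : ι) :
    |B.adjugate i j| ≤ (Fintype.card ι)! * c ^ Fintype.card ι := by
  rw [adjugate_apply, ← nsmul_eq_mul]
  refine det_le (abv := AbsoluteValue.abs) fun k l => ?_
  rw [updateRow_apply]
  split_ifs
  · rw [Pi.single_apply]
    split_ifs <;> simp only [AbsoluteValue.abs_apply, abs_one, abs_zero] <;> linarith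
  · exact hB k l

end EntryBounds

lemma dotProduct_inv_mulVec_le {ι F : Type*} [Fintype ι] [DecidableEq ι] [Field F] [LinearOrder F]
    [IsStrictOrderedRing F] {A : Matrix ι ι F} {c t : F} (hc : 1 ≤ c)
    (hA : ∀ i j, |A i j| ≤ c) (ht : 0 < t) (hdet : 1 / t ≤ A.det) (v : ι → F) :
    v ⬝ᵥ A⁻¹ *ᵥ v ≤
      t * ((Fintype.card ι)! * c ^ Fintype.card ι * Fintype.card ι) * (v ⬝ᵥ v) := by
  have hdet_inv : A.det⁻¹ ≤ t := by simpa using inv_anti₀ (one_div_pos.2 ht) hdet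
  have hadj := abs_dotProduct_mulVec_self_le (by positivity) (abs_adjugate_apply_le hc hA) v
  have hdet_inv_nonneg : 0 ≤ A.det⁻¹ := inv_nonneg.2 ((one_div_pos.2 ht).le.trans hdet)
  rw [Matrix.inv_def, Ring.inverse_eq_inv', smul_mulVec, dotProduct_smul, smul_eq_mul, mul_assoc]
  exact (mul_le_mul_of_nonneg_left ((le_abs_self _).trans hadj) hdet_inv_nonneg).trans
    (mul_le_mul_of_nonneg_right hdet_inv (by positivity [dotProduct_self_nonneg v]))

section PSD

variable {F : Type*} [Field F] [LinearOrder F] [IsStrictOrderedRing F] {n : ℕ}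
  {A : Matrix (Fin n) (Fin n) F}

lemma psd_sub_smul_one_iff (t : F) :
    PSD (A - t • 1) ↔ ∀ v, t * (v ⬝ᵥ v) ≤ v ⬝ᵥ A *ᵥ v := by
  simp only [PSD, sub_mulVec, smul_mulVec, one_mulVec, dotProduct_sub, dotProduct_smul,
    smul_eq_mul, sub_nonneg]

lemma psd_smul_one_sub_iff (t : F) :
    PSD (t • 1 - A) ↔ ∀ v, v ⬝ᵥ A *ᵥ v ≤ t * (v ⬝ᵥ v) := by
  simp only [PSD, sub_mulVec, smul_mulVec, one_mulVec, dotProduct_sub, dotProduct_smul,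
    smul_eq_mul, sub_nonneg]

lemma PSD.dotProduct_mulVec_mul_self_le (hA : PSD A) (hAs : A.IsSymm) (v w : Fin n → F) :
    (v ⬝ᵥ A *ᵥ w) * (v ⬝ᵥ A *ᵥ w) ≤ (v ⬝ᵥ A *ᵥ v) * (w ⬝ᵥ A *ᵥ w) := by
  have hsymm : w ⬝ᵥ A *ᵥ v = v ⬝ᵥ A *ᵥ w := by
    simpa only [hAs.eq] using dotProduct_transpose_mulVec A w v
  have hquad : ∀ x : F,
      0 ≤ (v ⬝ᵥ A *ᵥ v) * (x * x) + 2 * (v ⬝ᵥ A *ᵥ w) * x + w ⬝ᵥ A *ᵥ w := by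
    intro x
    have h := hA (w + x • v)
    simp only [mulVec_add, mulVec_smul, dotProduct_add, add_dotProduct, smul_dotProduct,
      dotProduct_smul, smul_eq_mul, hsymm] at h
    linarith
  have hdisc := discrim_le_zero hquad
  rw [discrim] at hdisc
  linarith

lemma PSD.diag_nonneg_s9 (hA : PSD A) (i : Fin n) : 0 ≤ A i i := by
  simpa only [mulVec_single_one, single_dotProduct, one_mul, col_apply] using hA (Pi.single i 1)

lemma PSD.abs_apply_le (hA : PSD A) (hAs : A.IsSymm) {c : F} (hc : ∀ i, A i i ≤ c)
    (i j : Fin n) : |A i j| ≤ c := by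
  have hcs := hA.dotProduct_mulVec_mul_self_le hAs (Pi.single i 1) (Pi.single j 1)
  simp only [mulVec_single_one, single_dotProduct, one_mul, col_apply] at hcs
  refine abs_le_of_sq_le_sq ?_ ((hA.diag_nonneg_s9 i).trans (hc i))
  calc A i j ^ 2 ≤ A i i * A j j := by rw [sq]; exact hcs
    _ ≤ c ^ 2 := by
      rw [sq]
      exact mul_le_mul (hc i) (hc j) (hA.diag_nonneg_s9 j) ((hA.diag_nonneg_s9 i).trans (hc i))

lemma PSD.dotProduct_self_le_of_inv (hA : PSD A) (hAs : A.IsSymm) (hdet : IsUnit A.det) {M : F}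
    (hM : ∀ v, v ⬝ᵥ A⁻¹ *ᵥ v ≤ M * (v ⬝ᵥ v)) (v : Fin n → F) :
    v ⬝ᵥ v ≤ M * (v ⬝ᵥ A *ᵥ v) := by
  set w := A⁻¹ *ᵥ v
  have hAw : A *ᵥ w = v := by rw [mulVec_mulVec, mul_nonsing_inv A hdet, one_mulVec]
  have hcs := hA.dotProduct_mulVec_mul_self_le hAs v w
  rw [hAw, dotProduct_comm w v] at hcs
  rcases (dotProduct_self_nonneg v).eq_or_lt with hv | hv
  · rw [← hv, dotProduct_self_eq_zero.1 hv.symm, mulVec_zero, dotProduct_zero, mul_zero]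
  · refine le_of_mul_le_mul_right ?_ hv
    calc (v ⬝ᵥ v) * (v ⬝ᵥ v) ≤ (v ⬝ᵥ A *ᵥ v) * (M * (v ⬝ᵥ v)) :=
          hcs.trans (mul_le_mul_of_nonneg_left (hM v) (hA v))
      _ = M * (v ⬝ᵥ A *ᵥ v) * (v ⬝ᵥ v) := by ring

end PSD

theorem stmt_9 (F : Type*) [Field F] [LinearOrder F] [IsStrictOrderedRing F] (n : ℕ)
    (A : Matrix (Fin n) (Fin n) F) (hAs : A.IsSymm) (hA : PSD A)
    (hdiag : ∀ i : Fin n, ∃ r : ℕ, A i i ≤ (r : F))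
    (hdet : ∃ r s : ℕ, 1 ≤ s ∧ 1 / (s : F) ≤ A.det ∧ A.det ≤ (r : F)) :
    IsUnit A ∧ ∃ r s : ℕ, 1 ≤ s ∧
      PSD (A - (1 / (s : F)) • (1 : Matrix (Fin n) (Fin n) F)) ∧
      PSD ((r : F) • (1 : Matrix (Fin n) (Fin n) F) - A) := by
  obtain ⟨-, s, hs, hdet_ge, -⟩ := hdet
  have hs_pos : (0 : F) < s := by exact_mod_cast hs
  have hdet_unit : IsUnit A.det := ((one_div_pos.2 hs_pos).trans_le hdet_ge).ne'.isUnit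
  choose r hr using hdiag
  obtain ⟨c, hc⟩ := Finite.exists_le r
  have hentry : ∀ i j, |A i j| ≤ ((c + 1 : ℕ) : F) :=
    hA.abs_apply_le hAs fun i => (hr i).trans (by exact_mod_cast (hc i).trans c.le_succ)
  -- `c + 1` because the adjugate bound needs `1 ≤ c`; the `+ 1` in `s` keeps `1 ≤ s` when `n = 0`.
  refine ⟨(isUnit_iff_isUnit_det A).2 hdet_unit, n * (c + 1),
    s * (n ! * (c + 1) ^ n * n) + 1, by omega, ?_, ?_⟩
  · rw [psd_sub_smul_one_iff]
    intro v
    have hlow := hA.dotProduct_self_le_of_inv hAs hdet_unit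
      (dotProduct_inv_mulVec_le (by simp) hentry hs_pos hdet_ge) v
    simp only [Fintype.card_fin] at hlow
    rw [div_mul_eq_mul_div, one_mul, div_le_iff₀ (by positivity)]
    push_cast at hlow ⊢
    nlinarith [hA v]
  · rw [psd_smul_one_sub_iff]
    intro v
    have hup := (le_abs_self _).trans (abs_dotProduct_mulVec_self_le (by positivity) hentry v)
    simp only [Fintype.card_fin] at hup
    push_cast at hup ⊢
    linarith
end

section
/- Let F be a linearly ordered field and A ∈ Sₙ⁺(F) positive semidefinite with s·Iₙ ≤ A for some natural number s ≥ 1 (in the Loewner order). Then (det A)⁻¹ exists and (det A)⁻¹ ≤ s⁻ⁿ, i.e., det A ≥ sⁿ. -/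
/-!
Split off the last coordinate, `A = [[P, b], [bᵀ, d]]`. Testing the quadratic form on the last
unit vector gives `d ≥ s > 0`, and testing it on `(x, -d⁻¹ bᵀ x)`, which `A` maps to `(S x, 0)`,
shows that the Schur complement `S = P - b d⁻¹ bᵀ` again satisfies `xᵀ S x ≥ s xᵀ x`. As
`det A = d · det S`, induction on `n` gives `det A ≥ sⁿ`. No spectral theorem is involved, so the
argument works over any ordered field.
-/

open Matrix

namespace Matrix

variable {l m R : Type*} [Fintype m]

theorem fromBlocks_mulVec_sumElim_neg_inv_mul_mulVec [Fintype l] [DecidableEq m] [CommRing R]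
    (P : Matrix l l R) (B : Matrix l m R) (C : Matrix m l R) (D : Matrix m m R) [Invertible D]
    (x : l → R) :
    fromBlocks P B C D *ᵥ Sum.elim x (-((D⁻¹ * C) *ᵥ x)) =
      Sum.elim ((P - B * D⁻¹ * C) *ᵥ x) 0 := by
  simp [fromBlocks_mulVec, mulVec_neg, sub_mulVec, mulVec_mulVec, ← Matrix.mul_assoc,
    ← sub_eq_add_neg]

theorem IsSymm.sub_mul_inv_mul [DecidableEq m] [CommRing R] {P : Matrix l l R}
    {B : Matrix l m R} {C : Matrix m l R} {D : Matrix m m R}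
    (h : (Matrix.fromBlocks P B C D).IsSymm) : (P - B * D⁻¹ * C).IsSymm := by
  obtain ⟨hP, -, hCB, hD⟩ := isSymm_fromBlocks_iff.mp h
  simp [IsSymm, transpose_mul, transpose_nonsing_inv, hP.eq, hD.eq, ← hCB, Matrix.mul_assoc]

/-- `s • 1 ≤ A` in the Loewner order. -/
def IsCoercive [CommRing R] [PartialOrder R] (s : R) (A : Matrix m m R) : Prop :=
  ∀ v : m → R, s * (v ⬝ᵥ v) ≤ v ⬝ᵥ A *ᵥ v

section OrderedRing

variable [CommRing R] [PartialOrder R] {s : R}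

theorem IsCoercive.le_apply_self [DecidableEq m] {A : Matrix m m R} (h : IsCoercive s A)
    (i : m) : s ≤ A i i := by
  simpa [mulVec_single_one, single_dotProduct] using h (Pi.single i 1)

theorem IsCoercive.submatrix_equiv [Fintype l] {A : Matrix m m R} (h : IsCoercive s A)
    (e : l ≃ m) : IsCoercive s (A.submatrix e e) := fun v =>
  calc s * (v ⬝ᵥ v) = s * (v ∘ e.symm ⬝ᵥ v ∘ e.symm) := by
        rw [comp_equiv_dotProduct_comp_equiv]
    _ ≤ v ∘ e.symm ⬝ᵥ A *ᵥ (v ∘ e.symm) := h _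
    _ = v ⬝ᵥ A.submatrix e e *ᵥ v := by
        rw [submatrix_mulVec_equiv, ← comp_equiv_dotProduct_comp_equiv _ _ e.symm]
        simp [Function.comp_def]

end OrderedRing

theorem IsCoercive.sub_mul_inv_mul [Fintype l] [DecidableEq m] [CommRing R] [LinearOrder R]
    [IsStrictOrderedRing R] {s : R} {P : Matrix l l R} {B : Matrix l m R} {C : Matrix m l R}
    {D : Matrix m m R} [Invertible D] (hs : 0 ≤ s) (h : IsCoercive s (fromBlocks P B C D)) :
    IsCoercive s (P - B * D⁻¹ * C) := fun x => by
  set y := -((D⁻¹ * C) *ᵥ x)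
  have hy : 0 ≤ y ⬝ᵥ y := Finset.sum_nonneg fun i _ => mul_self_nonneg (y i)
  have hxy := h (Sum.elim x y)
  rw [fromBlocks_mulVec_sumElim_neg_inv_mul_mulVec, sumElim_dotProduct_sumElim,
    sumElim_dotProduct_sumElim, dotProduct_zero, add_zero] at hxy
  nlinarith

theorem pow_le_det_of_isCoercive [Field R] [LinearOrder R] [IsStrictOrderedRing R] {s : R}
    (hs : 0 < s) {n : ℕ} (A : Matrix (Fin n) (Fin n) R) (hA : A.IsSymm) (h : IsCoercive s A) :
    s ^ n ≤ A.det := by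
  induction n with
  | zero => simp
  | succ n ih =>
    obtain ⟨P, B, C, D, hblocks⟩ : ∃ P B C D, A.submatrix finSumFinEquiv finSumFinEquiv =
        fromBlocks P B C (D : Matrix (Fin 1) (Fin 1) R) :=
      ⟨_, _, _, _, (fromBlocks_toBlocks _).symm⟩
    have hsymm : (fromBlocks P B C D).IsSymm := hblocks ▸ hA.submatrix _
    have hcoer : IsCoercive s (fromBlocks P B C D) := hblocks ▸ h.submatrix_equiv _
    have hd : s ≤ D 0 0 := hcoer.le_apply_self (Sum.inr 0)
    have := D.invertibleOfIsUnitDet (by rw [det_fin_one]; exact (hs.trans_le hd).ne'.isUnit)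
    have hschur := ih _ hsymm.sub_mul_inv_mul (hcoer.sub_mul_inv_mul hs.le)
    calc s ^ (n + 1) = s ^ n * s := pow_succ s n
      _ ≤ (P - B * D⁻¹ * C).det * D 0 0 :=
        mul_le_mul hschur hd hs.le ((pow_pos hs n).trans_le hschur).le
      _ = A.det := by
        rw [← det_submatrix_equiv_self finSumFinEquiv A, hblocks, det_fromBlocks₂₂, det_fin_one,
          invOf_eq_nonsing_inv, mul_comm]

end Matrix

theorem PSD.isCoercive_of_sub_smul_one {F : Type*} [Field F] [LinearOrder F]
    [IsStrictOrderedRing F] {n : ℕ} {A : Matrix (Fin n) (Fin n) F} {s : F}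
    (h : PSD (A - s • (1 : Matrix (Fin n) (Fin n) F))) : IsCoercive s A := fun v => by
  have hv := h v
  rw [sub_mulVec, dotProduct_sub, smul_mulVec, one_mulVec, dotProduct_smul, smul_eq_mul] at hv
  exact sub_nonneg.mp hv

theorem stmt_10_general (F : Type*) [Field F] [LinearOrder F] [IsStrictOrderedRing F] (n : ℕ)
    (A : Matrix (Fin n) (Fin n) F) (hAs : A.IsSymm)
    (s : ℕ) (hs : 1 ≤ s)
    (hle : PSD (A - (s : F) • (1 : Matrix (Fin n) (Fin n) F))) :
    A.det ≠ 0 ∧ (s : F) ^ n ≤ A.det := by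
  have hs_pos : (0 : F) < s := by exact_mod_cast hs
  have hdet := pow_le_det_of_isCoercive hs_pos A hAs hle.isCoercive_of_sub_smul_one
  exact ⟨((pow_pos hs_pos n).trans_le hdet).ne', hdet⟩

theorem stmt_10 (F : Type*) [Field F] [LinearOrder F] [IsStrictOrderedRing F] (n : ℕ)
    (A : Matrix (Fin n) (Fin n) F) (hAs : A.IsSymm) (hA : PSD A)
    (s : ℕ) (hs : 1 ≤ s)
    (hle : PSD (A - (s : F) • (1 : Matrix (Fin n) (Fin n) F))) :
    A.det ≠ 0 ∧ (s : F) ^ n ≤ A.det :=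
  stmt_10_general F n A hAs s hs hle
end

section
/- Let F be a linearly ordered field, A ∈ M_{k,n}(F), B ∈ M_{l,n}(F). Then A ⪰ B (∃ r ∈ ℕ with AᵀA ≤ r·BᵀB in the Loewner order on n×n symmetric matrices) if and only if there exists a bounded matrix C ∈ M_{k,l}(F) (i.e., ∃ r ∈ ℕ, CᵀC ≤ r·I_l) with A = C·B. -/
/-!
Writing `‖x‖² = x ⬝ᵥ x`, the Loewner inequality `AᵀA ≤ r BᵀB` says `‖A v‖² ≤ r ‖B v‖²` for all `v`.
Then `ker B ⊆ ker A`, so `B v ↦ A v` is a well-defined linear map on the range of `B`, with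
`‖·‖² ≤ r ‖·‖²`. The dot product is anisotropic over an ordered field, so every subspace has an
orthogonal complement and the orthogonal projection onto it does not increase `‖·‖²`; composing the
two maps gives a bounded `C` with `C B = A`. Conversely `‖C B v‖² ≤ r ‖B v‖²`.
-/

open Matrix

lemma LinearMap.exists_comp_rangeRestrict_eq_of_ker_le {R M N P : Type*} [Ring R]
    [AddCommGroup M] [AddCommGroup N] [AddCommGroup P] [Module R M] [Module R N] [Module R P]
    {a : M →ₗ[R] P} {b : M →ₗ[R] N} (h : ker b ≤ ker a) :
    ∃ d : range b →ₗ[R] P, d ∘ₗ b.rangeRestrict = a :=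
  ⟨(ker b).liftQ a h ∘ₗ b.quotKerEquivRange.symm, LinearMap.ext fun v => by
    change (ker b).liftQ a h (b.quotKerEquivRange.symm ⟨b v, mem_range_self b v⟩) = a v
    rw [quotKerEquivRange_symm_apply_image, Submodule.mkQ_apply, Submodule.liftQ_apply]⟩

lemma dotProduct_self_nonneg_s13 {R m : Type*} [Ring R] [LinearOrder R] [IsStrictOrderedRing R]
    [Fintype m] (v : m → R) : 0 ≤ v ⬝ᵥ v :=
  Finset.sum_nonneg fun i _ => mul_self_nonneg (v i)

lemma isRefl_dotProductBilin {R m : Type*} [CommRing R] [Fintype m] :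
    LinearMap.BilinForm.IsRefl (dotProductBilin R R : LinearMap.BilinForm R (m → R)) :=
  fun x y h => by simpa [dotProduct_comm] using h

section DotProduct

variable {F : Type*} [Field F] [LinearOrder F] [IsStrictOrderedRing F]

section Projection

variable {m : Type*} [Fintype m]

lemma isCompl_orthogonal_dotProductBilin (W : Submodule F (m → F)) :
    IsCompl W (LinearMap.BilinForm.orthogonal (dotProductBilin F F) W) :=
  (LinearMap.BilinForm.isCompl_orthogonal_iff_disjoint isRefl_dotProductBilin).2 <|
    Submodule.disjoint_def.2 fun x hxW hxO => dotProduct_self_eq_zero.1 (hxO x hxW)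

noncomputable abbrev orthogonalProjectionDot (W : Submodule F (m → F)) : (m → F) →ₗ[F] W :=
  W.projectionOnto _ (isCompl_orthogonal_dotProductBilin W)

lemma dotProduct_self_orthogonalProjectionDot_le (W : Submodule F (m → F)) (u : m → F) :
    (orthogonalProjectionDot W u : m → F) ⬝ᵥ (orthogonalProjectionDot W u : m → F) ≤ u ⬝ᵥ u := by
  set w : m → F := ↑(orthogonalProjectionDot W u)
  have hw : w ⬝ᵥ (u - w) = 0 := by
    have := Submodule.sub_projection_mem (isCompl_orthogonal_dotProductBilin W) u
    rw [← Submodule.coe_projectionOnto_apply] at this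
    exact this w (orthogonalProjectionDot W u).2
  calc w ⬝ᵥ w ≤ w ⬝ᵥ w + 2 * (w ⬝ᵥ (u - w)) + (u - w) ⬝ᵥ (u - w) := by
        rw [hw]; linarith [dotProduct_self_nonneg_s13 (u - w)]
    _ = u ⬝ᵥ u := by
        simp only [dotProduct_sub, sub_dotProduct, dotProduct_comm u w]; ring

end Projection

variable {V : Type*} [AddCommGroup V] [Module F V] {k l : Type*} [Fintype k] [Fintype l]

lemma ker_le_ker_of_dotProduct_self_le {a : V →ₗ[F] k → F} {b : V →ₗ[F] l → F} {r : F}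
    (h : ∀ v, a v ⬝ᵥ a v ≤ r * (b v ⬝ᵥ b v)) : LinearMap.ker b ≤ LinearMap.ker a := by
  intro v hv
  rw [LinearMap.mem_ker] at hv ⊢
  refine dotProduct_self_eq_zero.1 (le_antisymm ?_ (dotProduct_self_nonneg_s13 _))
  simpa [hv] using h v

/-- Take `b v ↦ a v` on the range of `b`, precomposed with the orthogonal projection onto
that range. -/
lemma exists_comp_eq_of_dotProduct_self_le {a : V →ₗ[F] k → F} {b : V →ₗ[F] l → F} {r : F}
    (hr : 0 ≤ r) (h : ∀ v, a v ⬝ᵥ a v ≤ r * (b v ⬝ᵥ b v)) :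
    ∃ c : (l → F) →ₗ[F] k → F, c ∘ₗ b = a ∧ ∀ u, c u ⬝ᵥ c u ≤ r * (u ⬝ᵥ u) := by
  obtain ⟨d, hd⟩ := LinearMap.exists_comp_rangeRestrict_eq_of_ker_le (a := a) (b := b)
    (ker_le_ker_of_dotProduct_self_le h)
  have hdb (v : V) : d ⟨b v, LinearMap.mem_range_self b v⟩ = a v := LinearMap.congr_fun hd v
  set P := orthogonalProjectionDot (LinearMap.range b)
  refine ⟨d ∘ₗ P, LinearMap.ext fun v => ?_, fun u => ?_⟩
  · simp [P, Submodule.projectionOnto_apply_of_mem_left _ (LinearMap.mem_range_self b v), hdb]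
  · obtain ⟨v, hv⟩ := (P u).2
    have hPu : P u = ⟨b v, LinearMap.mem_range_self b v⟩ := Subtype.ext hv.symm
    calc (d ∘ₗ P) u ⬝ᵥ (d ∘ₗ P) u = a v ⬝ᵥ a v := by simp [hPu, hdb]
      _ ≤ r * ((P u : l → F) ⬝ᵥ (P u : l → F)) := by rw [hPu]; exact h v
      _ ≤ r * (u ⬝ᵥ u) :=
        mul_le_mul_of_nonneg_left (dotProduct_self_orthogonalProjectionDot_le _ u) hr

end DotProduct

section PSD

variable {F : Type*} [Field F] [LinearOrder F] [IsStrictOrderedRing F] {k l n : ℕ}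

lemma psd_smul_transpose_mul_sub_iff (A : Matrix (Fin k) (Fin n) F)
    (B : Matrix (Fin l) (Fin n) F) (s : F) :
    PSD (s • (Bᵀ * B) - Aᵀ * A) ↔ ∀ v, A *ᵥ v ⬝ᵥ A *ᵥ v ≤ s * (B *ᵥ v ⬝ᵥ B *ᵥ v) := by
  refine forall_congr' fun v => ?_
  rw [sub_mulVec, smul_mulVec, ← mulVec_mulVec, ← mulVec_mulVec, dotProduct_sub, dotProduct_smul,
    dotProduct_mulVec v Bᵀ, dotProduct_mulVec v Aᵀ, vecMul_transpose, vecMul_transpose,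
    smul_eq_mul, sub_nonneg]

lemma psd_smul_one_sub_iff_s13 (C : Matrix (Fin k) (Fin l) F) (s : F) :
    PSD (s • 1 - Cᵀ * C) ↔ ∀ u, C *ᵥ u ⬝ᵥ C *ᵥ u ≤ s * (u ⬝ᵥ u) := by
  have := psd_smul_transpose_mul_sub_iff C (1 : Matrix (Fin l) (Fin l) F) s
  simpa only [transpose_one, one_mul, one_mulVec] using this

end PSD

theorem stmt_13 (F : Type*) [Field F] [LinearOrder F] [IsStrictOrderedRing F] (k l n : ℕ)
    (A : Matrix (Fin k) (Fin n) F) (B : Matrix (Fin l) (Fin n) F) :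
    (∃ r : ℕ, PSD ((r : F) • (Bᵀ * B) - Aᵀ * A)) ↔
      ∃ C : Matrix (Fin k) (Fin l) F,
        (∃ r : ℕ, PSD ((r : F) • (1 : Matrix (Fin l) (Fin l) F) - Cᵀ * C)) ∧ A = C * B := by
  simp only [psd_smul_transpose_mul_sub_iff, psd_smul_one_sub_iff_s13]
  constructor
  · rintro ⟨r, hr⟩
    obtain ⟨c, hcB, hc⟩ := exists_comp_eq_of_dotProduct_self_le (a := toLin' A) (b := toLin' B)
      r.cast_nonneg (by simpa only [toLin'_apply] using hr)
    refine ⟨LinearMap.toMatrix' c, ⟨r, by simpa only [LinearMap.toMatrix'_mulVec] using hc⟩, ?_⟩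
    rw [← LinearMap.toMatrix'_toLin' A, ← hcB, LinearMap.toMatrix'_comp,
      LinearMap.toMatrix'_toLin']
  · rintro ⟨C, ⟨r, hr⟩, rfl⟩
    exact ⟨r, fun v => by simpa only [mulVec_mulVec] using hr (B *ᵥ v)⟩
end

section
/- Let F be a linearly ordered field and A, B, C ∈ Sₙ⁺(F) positive semidefinite matrices. The parallel sum is A : B = A(A+B)⁺B where (A+B)⁺ is the Moore–Penrose inverse. If A ≤ B (Loewner order) then A : C ≤ B : C. -/
open Matrix

/-- `P` is the Moore–Penrose inverse of `M` (Penrose conditions). -/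
def IsMoorePenrose {F : Type*} [Field F] [LinearOrder F] [IsStrictOrderedRing F] {n : ℕ}
    (M P : Matrix (Fin n) (Fin n) F) : Prop :=
  M * P * M = M ∧ P * M * P = P ∧ (M * P)ᵀ = M * P ∧ (P * M)ᵀ = P * M

/-!
The quadratic form of the parallel sum has the variational description
`⟪v, (A : C) v⟫ = min_x (⟪x, A x⟫ + ⟪v - x, C (v - x)⟫)`, the minimum being attained at
`x = (A + C)⁺ C v`: the difference between the two sides is `⟪x - y, (A + C) (x - y)⟫` with
`y = (A + C)⁺ C v`, which only needs `(A + C)(A + C)⁺ C = C`, i.e. `ker (A + C) ⊆ ker C`.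
The objective is monotone in `A`, hence so is its minimum: evaluating the objective for `B` at
its minimiser and comparing with the one for `A` at the same point gives `A : C ≤ B : C`.
-/

section ParallelSum

variable {F : Type*} [Field F] [LinearOrder F] [IsStrictOrderedRing F]

lemma eq_zero_of_forall_quadratic_nonneg {a b : F} (hb : 0 ≤ b)
    (h : ∀ t : F, 0 ≤ 2 * t * a + t ^ 2 * b) : a = 0 := by
  have hb1 : 0 < b + 1 := by linarith
  have hval : 2 * (-a / (b + 1)) * a + (-a / (b + 1)) ^ 2 * b =
      -(a ^ 2 * (b + 2) / (b + 1) ^ 2) := by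
    field_simp; ring
  have hq := h (-a / (b + 1))
  rw [hval, neg_nonneg] at hq
  have : a ^ 2 * (b + 2) / (b + 1) ^ 2 = 0 := le_antisymm hq (by positivity)
  simpa [hb1.ne', (by linarith : b + 2 ≠ 0)] using this

variable {n : ℕ}

lemma Matrix.IsSymm.dotProduct_mulVec_comm_s14 {R m : Type*} [CommSemiring R] [Fintype m]
    {M : Matrix m m R} (hM : M.IsSymm) (v w : m → R) : v ⬝ᵥ M *ᵥ w = w ⬝ᵥ M *ᵥ v := by
  rw [dotProduct_mulVec, ← mulVec_transpose, hM, dotProduct_comm]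

lemma PSD.add {M N : Matrix (Fin n) (Fin n) F} (hM : PSD M) (hN : PSD N) : PSD (M + N) :=
  fun v => by rw [add_mulVec, dotProduct_add]; exact add_nonneg (hM v) (hN v)

lemma PSD.mulVec_eq_zero_s14 {M : Matrix (Fin n) (Fin n) F} (hMs : M.IsSymm) (hM : PSD M)
    {w : Fin n → F} (hw : w ⬝ᵥ M *ᵥ w = 0) : M *ᵥ w = 0 := by
  have h_orth : ∀ u, u ⬝ᵥ M *ᵥ w = 0 := fun u =>
    eq_zero_of_forall_quadratic_nonneg (hM u) fun t => by
      have h := hM (w + t • u)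
      simp only [mulVec_add, mulVec_smul, dotProduct_add, add_dotProduct, dotProduct_smul,
        smul_dotProduct, smul_eq_mul, hw, hMs.dotProduct_mulVec_comm_s14 w u] at h
      linarith
  funext i
  simpa using h_orth (Pi.single i 1)

lemma PSD.mulVec_eq_zero_of_add_mulVec_eq_zero {M N : Matrix (Fin n) (Fin n) F} (hNs : N.IsSymm)
    (hM : PSD M) (hN : PSD N) {w : Fin n → F} (hw : (M + N) *ᵥ w = 0) : N *ᵥ w = 0 := by
  have hsum : w ⬝ᵥ M *ᵥ w + w ⬝ᵥ N *ᵥ w = 0 := by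
    rw [← dotProduct_add, ← add_mulVec, hw, dotProduct_zero]
  exact hN.mulVec_eq_zero_s14 hNs (le_antisymm (by linarith [hM w]) (hN w))

/-- `S S⁺` is the orthogonal projection onto `im S = (ker S)ᗮ`, which contains `(ker C)ᗮ = im C`. -/
lemma IsMoorePenrose.mul_mul_eq_of_ker_le {S P C : Matrix (Fin n) (Fin n) F} (hSs : S.IsSymm)
    (hCs : C.IsSymm) (hP : IsMoorePenrose S P) (hker : ∀ w, S *ᵥ w = 0 → C *ᵥ w = 0) :
    S * P * C = C := by
  obtain ⟨hSPS, -, hSP, -⟩ := hP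
  have hproj_symm : (1 - S * P)ᵀ = 1 - S * P := by rw [transpose_sub, transpose_one, hSP]
  have hS_proj : S * (1 - S * P) = 0 := by
    have : (1 - S * P) * S = 0 := by rw [sub_mul, one_mul, hSPS, sub_self]
    simpa [transpose_mul, hproj_symm, hSs.eq] using congrArg transpose this
  have hC_proj : C * (1 - S * P) = 0 := ext_iff_mulVec.mpr fun w => by
    rw [zero_mulVec, ← mulVec_mulVec]
    exact hker _ (by rw [mulVec_mulVec, hS_proj, zero_mulVec])
  have : (1 - S * P) * C = 0 := by
    simpa [transpose_mul, hproj_symm, hCs.eq] using congrArg transpose hC_proj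
  rw [sub_mul, one_mul, sub_eq_zero] at this
  exact this.symm

lemma dotProduct_mulVec_parallelSum_add {A C P : Matrix (Fin n) (Fin n) F} (hAs : A.IsSymm)
    (hCs : C.IsSymm) (hSPC : (A + C) * P * C = C) (v x : Fin n → F) :
    v ⬝ᵥ (A * P * C) *ᵥ v + (x - P *ᵥ C *ᵥ v) ⬝ᵥ (A + C) *ᵥ (x - P *ᵥ C *ᵥ v) =
      x ⬝ᵥ A *ᵥ x + (v - x) ⬝ᵥ C *ᵥ (v - x) := by
  set y := P *ᵥ C *ᵥ v
  have hy : A *ᵥ y + C *ᵥ y = C *ᵥ v := by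
    rw [← add_mulVec, mulVec_mulVec, mulVec_mulVec, hSPC]
  have hdot (z : Fin n → F) : z ⬝ᵥ A *ᵥ y + z ⬝ᵥ C *ᵥ y = z ⬝ᵥ C *ᵥ v := by
    rw [← dotProduct_add, hy]
  rw [← mulVec_mulVec, ← mulVec_mulVec]
  simp only [mulVec_sub, add_mulVec, dotProduct_sub, sub_dotProduct, dotProduct_add]
  linear_combination hdot v + hdot y - 2 * hdot x - hAs.dotProduct_mulVec_comm_s14 y x
    - hCs.dotProduct_mulVec_comm_s14 y x + hCs.dotProduct_mulVec_comm_s14 v x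
    - hCs.dotProduct_mulVec_comm_s14 v y

section Variational

variable {A C P : Matrix (Fin n) (Fin n) F} (hAs : A.IsSymm) (hCs : C.IsSymm) (hA : PSD A)
  (hC : PSD C) (hP : IsMoorePenrose (A + C) P)
include hAs hCs hA hC hP

lemma IsMoorePenrose.add_mul_mul_eq_right : (A + C) * P * C = C :=
  hP.mul_mul_eq_of_ker_le (hAs.add hCs) hCs fun _ hw =>
    hA.mulVec_eq_zero_of_add_mulVec_eq_zero hCs hC hw

lemma dotProduct_mulVec_parallelSum_le (v x : Fin n → F) :
    v ⬝ᵥ (A * P * C) *ᵥ v ≤ x ⬝ᵥ A *ᵥ x + (v - x) ⬝ᵥ C *ᵥ (v - x) := by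
  rw [← dotProduct_mulVec_parallelSum_add hAs hCs (hP.add_mul_mul_eq_right hAs hCs hA hC) v x]
  exact le_add_of_nonneg_right (hA.add hC _)

lemma dotProduct_mulVec_parallelSum_eq (v : Fin n → F) :
    v ⬝ᵥ (A * P * C) *ᵥ v =
      (P *ᵥ C *ᵥ v) ⬝ᵥ A *ᵥ (P *ᵥ C *ᵥ v) + (v - P *ᵥ C *ᵥ v) ⬝ᵥ C *ᵥ (v - P *ᵥ C *ᵥ v) := by
  simpa using dotProduct_mulVec_parallelSum_add hAs hCs
    (hP.add_mul_mul_eq_right hAs hCs hA hC) v (P *ᵥ C *ᵥ v)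

end Variational

end ParallelSum

theorem stmt_14_general (F : Type*) [Field F] [LinearOrder F] [IsStrictOrderedRing F] (n : ℕ)
    (A B C : Matrix (Fin n) (Fin n) F)
    (hAs : A.IsSymm) (hBs : B.IsSymm) (hCs : C.IsSymm)
    (hA : PSD A) (hC : PSD C)
    (P Q : Matrix (Fin n) (Fin n) F)
    (hP : IsMoorePenrose (A + C) P) (hQ : IsMoorePenrose (B + C) Q)
    (hle : PSD (B - A)) :
    PSD (B * Q * C - A * P * C) := by
  intro v
  have hB : PSD B := by simpa using hA.add hle
  have hBQC := dotProduct_mulVec_parallelSum_eq hBs hCs hB hC hQ v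
  have hAPC := dotProduct_mulVec_parallelSum_le hAs hCs hA hC hP v (Q *ᵥ C *ᵥ v)
  have hAB := hle (Q *ᵥ C *ᵥ v)
  rw [sub_mulVec, dotProduct_sub] at hAB ⊢
  linarith

theorem stmt_14 (F : Type*) [Field F] [LinearOrder F] [IsStrictOrderedRing F] (n : ℕ)
    (A B C : Matrix (Fin n) (Fin n) F)
    (hAs : A.IsSymm) (hBs : B.IsSymm) (hCs : C.IsSymm)
    (hA : PSD A) (hB : PSD B) (hC : PSD C)
    (P Q : Matrix (Fin n) (Fin n) F)
    (hP : IsMoorePenrose (A + C) P) (hQ : IsMoorePenrose (B + C) Q)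
    (hle : PSD (B - A)) :
    PSD (B * Q * C - A * P * C) :=
  stmt_14_general F n A B C hAs hBs hCs hA hC P Q hP hQ hle
end

section
/- Let F be a linearly ordered field and w, z ∈ Fⁿ vectors such that r·zzᵀ − wwᵀ is positive semidefinite for some r ∈ F, r ≥ 0. Then there exists α ∈ F with w = α·z and α² ≤ r. -/
/-!
Positive semidefiniteness of `r zzᵀ - wwᵀ` says `(w ⬝ᵥ v)² ≤ r (z ⬝ᵥ v)²` for every `v`.
Hence every `v` orthogonal to `z` is orthogonal to `w`, which forces `w = α z`;
testing against `v = z` then gives `α² ≤ r`, and `z = 0` forces `w = 0`.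
-/

open Matrix

section

variable {ι : Type*} [Fintype ι]

theorem dotProduct_vecMulVec_self_mulVec {R : Type*} [CommSemiring R] (a v : ι → R) :
    v ⬝ᵥ vecMulVec a a *ᵥ v = (a ⬝ᵥ v) ^ 2 := by
  rw [vecMulVec_mulVec, op_smul_eq_smul, dotProduct_smul, smul_eq_mul, dotProduct_comm, sq]

theorem exists_eq_smul_of_dotProduct_eq_zero {K : Type*} [Field K] [DecidableEq ι]
    {w z : ι → K} (h : ∀ v, z ⬝ᵥ v = 0 → w ⬝ᵥ v = 0) : ∃ α : K, w = α • z := by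
  by_cases hz : z = 0
  · refine ⟨0, funext fun i => ?_⟩
    simpa [hz, dotProduct_single] using h (Pi.single i 1)
  obtain ⟨j, hj⟩ := Function.ne_iff.mp hz
  refine ⟨w j / z j, funext fun i => ?_⟩
  -- `z j • eᵢ - z i • eⱼ` is orthogonal to `z`; pairing it with `w` gives `w i z j = w j z i`.
  have hw := h (z j • Pi.single i 1 - z i • Pi.single j 1) (by
    simp only [dotProduct_sub, dotProduct_smul, dotProduct_single, smul_eq_mul]; ring)
  simp only [dotProduct_sub, dotProduct_smul, dotProduct_single, smul_eq_mul, mul_one] at hw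
  rw [Pi.smul_apply, smul_eq_mul, div_mul_eq_mul_div, eq_div_iff hj]
  linear_combination hw

variable {F : Type*} [Field F] [LinearOrder F] [IsStrictOrderedRing F]

theorem dotProduct_eq_zero_of_sq_dotProduct_le {w z : ι → F} {r : F}
    (h : ∀ v, (w ⬝ᵥ v) ^ 2 ≤ r * (z ⬝ᵥ v) ^ 2) (v : ι → F) (hv : z ⬝ᵥ v = 0) :
    w ⬝ᵥ v = 0 :=
  pow_eq_zero_iff two_ne_zero |>.mp <| le_antisymm (by simpa [hv] using h v) (sq_nonneg _)

theorem PSD.sq_dotProduct_le {n : ℕ} {w z : Fin n → F} {r : F}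
    (h : PSD (r • vecMulVec z z - vecMulVec w w)) (v : Fin n → F) :
    (w ⬝ᵥ v) ^ 2 ≤ r * (z ⬝ᵥ v) ^ 2 := by
  have hv := h v
  rwa [sub_mulVec, dotProduct_sub, smul_mulVec, dotProduct_smul, smul_eq_mul,
    dotProduct_vecMulVec_self_mulVec, dotProduct_vecMulVec_self_mulVec, sub_nonneg] at hv

end

theorem stmt_19 (F : Type*) [Field F] [LinearOrder F] [IsStrictOrderedRing F] (n : ℕ)
    (w z : Fin n → F) (r : F) (hr : 0 ≤ r)
    (h : PSD (r • Matrix.vecMulVec z z - Matrix.vecMulVec w w)) :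
    ∃ α : F, w = α • z ∧ α ^ 2 ≤ r := by
  have hsq := h.sq_dotProduct_le
  obtain ⟨α, rfl⟩ :=
    exists_eq_smul_of_dotProduct_eq_zero (dotProduct_eq_zero_of_sq_dotProduct_le hsq)
  by_cases hz : z = 0
  · exact ⟨0, by simp [hz], by simpa using hr⟩
  have hzz : 0 < (z ⬝ᵥ z) ^ 2 := sq_pos_of_ne_zero (dotProduct_self_eq_zero.not.mpr hz)
  refine ⟨α, rfl, le_of_mul_le_mul_right ?_ hzz⟩
  simpa [smul_dotProduct, mul_pow] using hsq z
end
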